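/- arXiv:0712.3568 — 2 statements merged into one kernel-verified Lean document; each statement's English description precedes it below -/
import Mathlib

section
/- Let K be a full component with at most b Steiner vertices and let Δ(K) be the maximum cost of a terminal-terminal path in K. Then the loss of K satisfies l(K) ≤ b·Δ(K)/2; equivalently Δ(K) ≥ (2/b)·l(K). -/
open scoped Classical

noncomputable section

variable {V : Type*}

/-- A full component on terminal set `R`. -/
structure FullComp [Fintype V] (G : SimpleGraph V) (R : Set V) where
  sub : G.Subgraph
  tree : sub.coe.IsTree
  leaf_iff : ∀ v ∈ sub.verts, v ∈ R ↔ sub.degree v = 1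

/-- Cost of a walk: sum of the costs of its edges. -/
def walkCost (c : Sym2 V → ℝ) {G : SimpleGraph V} {u v : V} (p : G.Walk u v) : ℝ :=
  (p.edges.map c).sum

/-- `F` is a candidate loss ("connector") for the subgraph `H`. -/
def IsConnector {G : SimpleGraph V} (R : Set V) (H : G.Subgraph)
    (F : Set (Sym2 V)) : Prop :=
  F ⊆ H.edgeSet ∧ ∀ v ∈ H.verts, ∃ t ∈ R, (SimpleGraph.fromEdgeSet F).Reachable v t

/-!
Every Steiner vertex `s` of `K` is an inner vertex of the tree, so it has two neighbours.
Extending the edges to them greedily gives two paths from `s` ending at leaves, i.e. at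
terminals; by acyclicity they meet only at `s`, so together they form a terminal–terminal
path of cost at most `Δ`, and one of them costs at most `Δ / 2`. The union of these paths
over the at most `b` Steiner vertices connects every vertex to a terminal, hence bounds the
loss by `b · Δ / 2`.
-/

open SimpleGraph

lemma List.sum_toFinset_le_sum_map {α M : Type*} [DecidableEq α] [AddCommMonoid M]
    [PartialOrder M] [IsOrderedAddMonoid M] {f : α → M} (hf : ∀ x, 0 ≤ f x) (l : List α) :
    ∑ x ∈ l.toFinset, f x ≤ (l.map f).sum := by
  rw [show l.toFinset = l.dedup.toFinset by ext; simp, List.sum_toFinset _ l.nodup_dedup]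
  exact ((l.dedup_sublist).map f).sum_le_sum (by simpa using fun x _ => hf x)

lemma finsum_mem_union_le {α M : Type*} [AddCommMonoid M] [PartialOrder M] [IsOrderedAddMonoid M]
    {f : α → M} (hf : ∀ x, 0 ≤ f x) {s t : Set α} (hs : s.Finite) (ht : t.Finite) :
    ∑ᶠ x ∈ s ∪ t, f x ≤ ∑ᶠ x ∈ s, f x + ∑ᶠ x ∈ t, f x := by
  rw [← finsum_mem_union_inter hs ht]
  exact le_add_of_nonneg_right (finsum_nonneg fun x => finsum_nonneg fun _ => hf x)

lemma finsum_mem_biUnion_le {ι α M : Type*} [Finite α] [AddCommMonoid M] [PartialOrder M]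
    [IsOrderedAddMonoid M] {f : α → M} (hf : ∀ x, 0 ≤ f x) (I : Finset ι) (s : ι → Set α) :
    ∑ᶠ x ∈ ⋃ i ∈ I, s i, f x ≤ ∑ i ∈ I, ∑ᶠ x ∈ s i, f x :=
  I.apply_union_le_sum (f := fun s => ∑ᶠ x ∈ s, f x) finsum_mem_empty
    (finsum_mem_union_le hf (Set.toFinite _) (Set.toFinite _))

section walkCost

variable {V' : Type*} {G : SimpleGraph V}

lemma walkCost_nonneg {c : Sym2 V → ℝ} (hc : ∀ e, 0 ≤ c e) {u v : V} (p : G.Walk u v) :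
    0 ≤ walkCost c p :=
  List.sum_nonneg <| by simpa using fun e _ => hc e

@[simp]
lemma walkCost_append (c : Sym2 V → ℝ) {u v w : V} (p : G.Walk u v) (q : G.Walk v w) :
    walkCost c (p.append q) = walkCost c p + walkCost c q := by
  simp [walkCost]

@[simp]
lemma walkCost_reverse (c : Sym2 V → ℝ) {u v : V} (p : G.Walk u v) :
    walkCost c p.reverse = walkCost c p := by
  simp [walkCost]

lemma walkCost_map {G' : SimpleGraph V'} (c : Sym2 V' → ℝ) (f : G →g G') {u v : V}
    (p : G.Walk u v) : walkCost c (p.map f) = walkCost (c ∘ Sym2.map f) p := by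
  simp [walkCost]

lemma finsum_mem_edges_le_walkCost {c : Sym2 V → ℝ} (hc : ∀ e, 0 ≤ c e) {u v : V}
    (p : G.Walk u v) :
    ∑ᶠ e ∈ {e | e ∈ p.edges}, c e ≤ walkCost c p := by
  rw [← List.coe_toFinset, finsum_mem_coe_finset]
  exact List.sum_toFinset_le_sum_map hc _

end walkCost

theorem exists_isConnector_finsum_le [Finite V] {G : SimpleGraph V} (R : Set V)
    (H : G.Subgraph) {c : Sym2 V → ℝ} (hc : ∀ e, 0 ≤ c e) (d : ℝ)
    (h : ∀ v ∈ H.verts \ R, ∃ t ∈ R, ∃ p : H.spanningCoe.Walk v t, walkCost c p ≤ d) :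
    ∃ F, IsConnector R H F ∧ ∑ᶠ e ∈ F, c e ≤ (H.verts \ R).ncard * d := by
  have h' : ∀ v, ∃ t, ∃ p : H.spanningCoe.Walk v t,
      v ∈ H.verts \ R → t ∈ R ∧ walkCost c p ≤ d := by
    intro v
    by_cases hv : v ∈ H.verts \ R
    · obtain ⟨t, htR, p, hp⟩ := h v hv
      exact ⟨t, p, fun _ => ⟨htR, hp⟩⟩
    · exact ⟨v, .nil, fun h => absurd h hv⟩
  choose t p hp using h'
  set S := (H.verts \ R).toFinite.toFinset
  refine ⟨⋃ v ∈ S, {e | e ∈ (p v).edges}, ⟨?_, fun v hv => ?_⟩, ?_⟩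
  · exact Set.iUnion₂_subset fun v _ e he => (p v).edges_subset_edgeSet he
  · by_cases hvR : v ∈ R
    · exact ⟨v, hvR, .rfl⟩
    have hvS : v ∈ S := by simpa [S] using ⟨hv, hvR⟩
    refine ⟨t v, (hp v ⟨hv, hvR⟩).1, ⟨(p v).transfer _ fun e he => ?_⟩⟩
    rw [edgeSet_fromEdgeSet]
    exact ⟨Set.mem_biUnion hvS he, not_isDiag_of_mem_edgeSet _ ((p v).edges_subset_edgeSet he)⟩
  · calc ∑ᶠ e ∈ ⋃ v ∈ S, {e | e ∈ (p v).edges}, c e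
        ≤ ∑ v ∈ S, ∑ᶠ e ∈ {e | e ∈ (p v).edges}, c e := finsum_mem_biUnion_le hc S _
      _ ≤ ∑ _v ∈ S, d := Finset.sum_le_sum fun v hv =>
          (finsum_mem_edges_le_walkCost hc (p v)).trans (hp v (by simpa [S] using hv)).2
      _ = (H.verts \ R).ncard * d := by
          rw [Finset.sum_const, nsmul_eq_mul, Set.ncard_eq_toFinset_card _ (Set.toFinite _)]

namespace SimpleGraph.IsAcyclic

variable {W : Type*} {T : SimpleGraph W}

theorem exists_isPath_append_degree_eq_one [Fintype W] [T.LocallyFinite] (hT : T.IsAcyclic)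
    {v w : W} (p : T.Walk v w) (hp : p.IsPath) (hne : ¬ p.Nil) :
    ∃ t, ∃ q : T.Walk w t, (p.append q).IsPath ∧ T.degree t = 1 := by
  by_cases hleaf : T.degree w = 1
  · exact ⟨w, .nil, by simpa using hp, hleaf⟩
  obtain ⟨u, hadj, hu⟩ : ∃ u, T.Adj w u ∧ u ≠ p.penultimate := by
    by_contra! h
    exact hleaf (degree_eq_one_iff_existsUnique_adj.mpr
      ⟨_, (p.adj_penultimate hne).symm, fun u hu => h u hu⟩)
  have hu_new : u ∉ p.support := fun hmem => hu (hT.eq_penultimate_of_adj_end hp hadj hmem)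
  have hlen := (hp.concat hu_new hadj).length_lt
  obtain ⟨t, q, hq, ht⟩ :=
    exists_isPath_append_degree_eq_one hT (p.concat hadj) (hp.concat hu_new hadj)
      (Walk.not_nil_iff_lt_length.mpr (by simp))
  exact ⟨t, .cons hadj q, by simpa [Walk.concat_append] using hq, ht⟩
termination_by Fintype.card W - p.length
decreasing_by simp only [Walk.length_concat] at hlen ⊢; omega

theorem isPath_reverse_append_cons (hT : T.IsAcyclic) {s w₁ w₂ t₁ t₂ : W} (h₁ : T.Adj s w₁)
    (h₂ : T.Adj s w₂) (hw : w₁ ≠ w₂) {q₁ : T.Walk w₁ t₁} {q₂ : T.Walk w₂ t₂}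
    (hp₁ : (Walk.cons h₁ q₁).IsPath) (hp₂ : (Walk.cons h₂ q₂).IsPath) :
    ((Walk.cons h₁ q₁).reverse.append (Walk.cons h₂ q₂)).IsPath := by
  rw [hT.isPath_iff_isChain, Walk.edges_append]
  refine List.isChain_append.mpr ⟨?_, (hT.isPath_iff_isChain _).mp hp₂, ?_⟩
  · exact (hT.isPath_iff_isChain _).mp hp₁.reverse
  · simp [Walk.edges_reverse, hw, h₁.ne']

theorem exists_isPath_to_leaf [Fintype W] [T.LocallyFinite] (hT : T.IsAcyclic) {s w : W}
    (h : T.Adj s w) :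
    ∃ t, ∃ q : T.Walk w t, (Walk.cons h q).IsPath ∧ T.degree t = 1 := by
  simpa using hT.exists_isPath_append_degree_eq_one (.cons h .nil) (by simp [h.ne]) (by simp)

theorem exists_isPath_walkCost_le_half [Fintype W] [T.LocallyFinite] (hT : T.IsAcyclic)
    (c : Sym2 W → ℝ) (Δ : ℝ) (hΔ : ∀ t₁ t₂, T.degree t₁ = 1 → T.degree t₂ = 1 →
      ∀ p : T.Walk t₁ t₂, p.IsPath → walkCost c p ≤ Δ)
    {s : W} (hs : 2 ≤ T.degree s) :
    ∃ t, ∃ p : T.Walk s t, p.IsPath ∧ T.degree t = 1 ∧ walkCost c p ≤ Δ / 2 := by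
  obtain ⟨w₁, hw₁, w₂, hw₂, hw⟩ :=
    Finset.one_lt_card.mp (by rwa [card_neighborFinset_eq_degree] : 1 < (T.neighborFinset s).card)
  rw [mem_neighborFinset] at hw₁ hw₂
  obtain ⟨t₁, q₁, hp₁, ht₁⟩ := hT.exists_isPath_to_leaf hw₁
  obtain ⟨t₂, q₂, hp₂, ht₂⟩ := hT.exists_isPath_to_leaf hw₂
  have hjoin := hΔ t₁ t₂ ht₁ ht₂ _ (hT.isPath_reverse_append_cons hw₁ hw₂ hw hp₁ hp₂)
  rw [walkCost_append, walkCost_reverse] at hjoin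
  rcases le_total (walkCost c (.cons hw₁ q₁)) (walkCost c (.cons hw₂ q₂)) with hle | hle
  · exact ⟨t₁, _, hp₁, ht₁, by linarith⟩
  · exact ⟨t₂, _, hp₂, ht₂, by linarith⟩

end SimpleGraph.IsAcyclic

namespace FullComp

variable [Fintype V] {G : SimpleGraph V} {R : Set V} (K : FullComp G R)

theorem mem_of_degree_eq_one {t : K.sub.verts} (ht : K.sub.coe.degree t = 1) : (t : V) ∈ R :=
  (K.leaf_iff t t.2).mpr (by rwa [← Subgraph.coe_degree])

theorem two_le_degree {u : V} (hu : u ∈ K.sub.verts) (huR : u ∈ R) {v : K.sub.verts}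
    (hvR : (v : V) ∉ R) : 2 ≤ K.sub.coe.degree v := by
  have hne : v ≠ ⟨u, hu⟩ := fun h => hvR (h ▸ huR)
  have hpos := (K.tree.connected.preconnected v ⟨u, hu⟩).degree_pos_left hne
  have hne1 : K.sub.coe.degree v ≠ 1 := fun h => hvR (K.mem_of_degree_eq_one h)
  omega

theorem exists_walk_walkCost_le_half (c : Sym2 V → ℝ) (Δ : ℝ)
    (hΔ : ∀ u ∈ K.sub.verts, u ∈ R → ∀ v ∈ K.sub.verts, v ∈ R →
      ∀ p : K.sub.spanningCoe.Walk u v, p.IsPath → walkCost c p ≤ Δ)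
    {u : V} (hu : u ∈ K.sub.verts) (huR : u ∈ R) {v : V} (hv : v ∈ K.sub.verts \ R) :
    ∃ t ∈ R, ∃ p : K.sub.spanningCoe.Walk v t, walkCost c p ≤ Δ / 2 := by
  let ι : K.sub.coe →g K.sub.spanningCoe := ⟨Subtype.val, id⟩
  have hΔ' : ∀ t₁ t₂, K.sub.coe.degree t₁ = 1 → K.sub.coe.degree t₂ = 1 →
      ∀ p : K.sub.coe.Walk t₁ t₂, p.IsPath → walkCost (c ∘ Sym2.map ι) p ≤ Δ := by
    intro t₁ t₂ ht₁ ht₂ p hp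
    rw [← walkCost_map]
    exact hΔ _ t₁.2 (K.mem_of_degree_eq_one ht₁) _ t₂.2 (K.mem_of_degree_eq_one ht₂) _
      (hp.map Subtype.val_injective)
  obtain ⟨t, p, -, ht, hcost⟩ := K.tree.isAcyclic.exists_isPath_walkCost_le_half _ Δ hΔ'
    (K.two_le_degree hu huR (v := ⟨v, hv.1⟩) hv.2)
  exact ⟨t, K.mem_of_degree_eq_one ht, p.map ι, by rwa [walkCost_map]⟩

end FullComp

theorem stmt9_general [Fintype V] (G : SimpleGraph V) (R : Finset V)
    (c : Sym2 V → ℝ) (hc : ∀ e, 0 ≤ c e)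
    (K : FullComp G (R : Set V)) (b : ℕ)
    (hcount : (K.sub.verts \ (R : Set V)).ncard ≤ b)
    (Δ : ℝ)
    (hΔ : IsGreatest {x : ℝ | ∃ u v, u ∈ K.sub.verts ∧ u ∈ (R : Set V) ∧
      v ∈ K.sub.verts ∧ v ∈ (R : Set V) ∧
      ∃ p : K.sub.spanningCoe.Walk u v, p.IsPath ∧ walkCost c p = x} Δ)
    (F₀ : Set (Sym2 V))
    (hF₀min : ∀ F', IsConnector (R : Set V) K.sub F' →
      (∑ᶠ e ∈ F₀, c e) ≤ ∑ᶠ e ∈ F', c e) :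
    (∑ᶠ e ∈ F₀, c e) ≤ (b : ℝ) * Δ / 2 ∧
      (2 / (b : ℝ)) * ∑ᶠ e ∈ F₀, c e ≤ Δ := by
  obtain ⟨u, _, hu, huR, -, -, p, -, hpΔ⟩ := hΔ.1
  have hΔ_nonneg : 0 ≤ Δ := hpΔ ▸ walkCost_nonneg hc p
  obtain ⟨F, hF, hFcost⟩ := exists_isConnector_finsum_le (R : Set V) K.sub hc _ fun v hv =>
    K.exists_walk_walkCost_le_half c _
      (fun u hu huR v hv hvR q hq => hΔ.2 ⟨u, v, hu, huR, hv, hvR, q, hq, rfl⟩) hu huR hv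
  have hloss : ∑ᶠ e ∈ F₀, c e ≤ b * Δ / 2 :=
    calc ∑ᶠ e ∈ F₀, c e ≤ ∑ᶠ e ∈ F, c e := hF₀min F hF
      _ ≤ (K.sub.verts \ (R : Set V)).ncard * (Δ / 2) := hFcost
      _ ≤ b * Δ / 2 := by
        rw [mul_div_assoc]; gcongr
  refine ⟨hloss, ?_⟩
  rcases Nat.eq_zero_or_pos b with rfl | hb
  · simpa using hΔ_nonneg -- `2 / 0 = 0` in `ℝ`
  · rw [div_mul_eq_mul_div, div_le_iff₀ (by exact_mod_cast hb)]
    linarith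

/-- Let `K` be a full component with at most `b` Steiner vertices and
let `Δ` be the maximum cost of a terminal-terminal path in `K`.  Then the loss of `K`
satisfies `l(K) ≤ b·Δ/2`, equivalently `Δ ≥ (2/b)·l(K)`. -/
theorem stmt9 [Fintype V] (G : SimpleGraph V) (R : Finset V)
    (c : Sym2 V → ℝ) (hc : ∀ e, 0 ≤ c e)
    (K : FullComp G (R : Set V)) (b : ℕ) (hb : 1 ≤ b)
    (hcount : (K.sub.verts \ (R : Set V)).ncard ≤ b)
    (Δ : ℝ)
    (hΔ : IsGreatest {x : ℝ | ∃ u v, u ∈ K.sub.verts ∧ u ∈ (R : Set V) ∧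
      v ∈ K.sub.verts ∧ v ∈ (R : Set V) ∧
      ∃ p : K.sub.spanningCoe.Walk u v, p.IsPath ∧ walkCost c p = x} Δ)
    (F₀ : Set (Sym2 V)) (hF₀ : IsConnector (R : Set V) K.sub F₀)
    (hF₀min : ∀ F', IsConnector (R : Set V) K.sub F' →
      (∑ᶠ e ∈ F₀, c e) ≤ ∑ᶠ e ∈ F', c e) :
    (∑ᶠ e ∈ F₀, c e) ≤ (b : ℝ) * Δ / 2 ∧
      (2 / (b : ℝ)) * ∑ᶠ e ∈ F₀, c e ≤ Δ :=
  stmt9_general G R c hc K b hcount Δ hΔ F₀ hF₀min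
end
end

section
/- If S ⊆ S' are families of full components, then every feasible solution x of the partition LP (P_ST^S) extends to a feasible solution x' of (P_ST^{S'}) with the same objective value, by setting x'_e = x_J for each edge e of each J ∈ S' \ S and keeping all other coordinates. Consequently, the integrality gap of (P_ST^S) is at most that of (P_ST^{S'}). -/
/-! Restrict a partition `π'` of `V(𝒮') ∪ R` to `V(𝒮) ∪ R` (`Finpartition.restrict`). This
changes neither the number of parts containing terminals, nor the number of parts met by the
terminals of any full component, nor which edges of the components of `𝒮` cross the partition.
A new component `J ∈ 𝒮' \ 𝒮` is a tree whose terminals meet `rc^π_J + 1` parts, so at least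
`rc^π_J` of its edges cross `π'`; each carries weight `x_J`, which pays for the term
`rc^π_J x_J` that leaves the full-component sum. The objective is unchanged because the edges
of `J` carry total cost `c(J) x_J`. -/

open scoped Classical

noncomputable section

variable {V : Type*}

variable [Fintype V] {G : SimpleGraph V} {R : Finset V}

/-- Feasibility for the partition LP `(P_ST^𝒮)`: nonnegativity, finite support of the
full-component variables, and for every partition `π` of `V(𝒮) ∪ R` (a `Finpartition`
of the finset `W`), the generalized Steiner partition inequality
`∑_{e ∈ E_π(𝒮)} x_e + ∑_{K ∈ 𝒦 \ 𝒮} rc^π_K x_K ≥ r̄(π) − 1`. -/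
def LPFeasible (𝒦 : Set (FullComp G (R : Set V))) (𝒮 : Finset (FullComp G (R : Set V)))
    (W : Finset V) (xe : Sym2 V → ℝ) (xK : FullComp G (R : Set V) → ℝ) : Prop :=
  (∀ e, 0 ≤ xe e) ∧ (∀ K, 0 ≤ xK K) ∧ (Function.support xK).Finite ∧
  ∀ π : Finpartition W,
    ((π.parts.filter fun P => ∃ t ∈ P, t ∈ R).card : ℝ) - 1 ≤
      (∑ᶠ e ∈ {e ∈ ⋃ K ∈ 𝒮, K.sub.edgeSet | ¬ ∃ P ∈ π.parts, ∀ v ∈ e, v ∈ P}, xe e)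
      + ∑ᶠ K ∈ 𝒦 \ (𝒮 : Set (FullComp G (R : Set V))),
          (((π.parts.filter fun P => ∃ t ∈ P, t ∈ (R : Set V) ∧ t ∈ K.sub.verts).card : ℝ)
              - 1) * xK K

/-- Objective value of the partition LP `(P_ST^𝒮)`. -/
def LPObj (c : Sym2 V → ℝ) (𝒦 : Set (FullComp G (R : Set V)))
    (𝒮 : Finset (FullComp G (R : Set V)))
    (xe : Sym2 V → ℝ) (xK : FullComp G (R : Set V) → ℝ) : ℝ :=
  (∑ᶠ e ∈ ⋃ K ∈ 𝒮, K.sub.edgeSet, c e * xe e)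
    + ∑ᶠ K ∈ 𝒦 \ (𝒮 : Set (FullComp G (R : Set V))),
        (∑ᶠ e ∈ K.sub.edgeSet, c e) * xK K


namespace SimpleGraph.Subgraph

variable {α β : Type*} {G : SimpleGraph α} {H : G.Subgraph}

lemma apply_eq_of_forall_isDiag (hH : H.coe.Preconnected) {q : α → β}
    (hq : ∀ e ∈ H.edgeSet, (e.map q).IsDiag) {u v : α} (hu : u ∈ H.verts) (hv : v ∈ H.verts) :
    q u = q v := by
  suffices ∀ {a b : H.verts}, H.coe.Walk a b → q a = q b from (hH ⟨u, hu⟩ ⟨v, hv⟩).elim this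
  intro a b p
  induction p with
  | nil => rfl
  | cons h _ ih =>
    have hd := hq _ (Subgraph.mem_edgeSet.mpr h)
    rw [Sym2.map_mk, Sym2.mk_isDiag_iff] at hd
    exact hd.trans ih

lemma ncard_crossing_merge_lt [Finite α] [DecidableEq β] {q : α → β} {u v : α}
    (huv : s(u, v) ∈ {e ∈ H.edgeSet | ¬(e.map q).IsDiag}) :
    {e ∈ H.edgeSet | ¬(e.map fun w => if q w = q v then q u else q w).IsDiag}.ncard <
      {e ∈ H.edgeSet | ¬(e.map q).IsDiag}.ncard := by
  set q' : α → β := fun w => if q w = q v then q u else q w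
  have hsub : {e ∈ H.edgeSet | ¬(e.map q').IsDiag} ⊆
      {e ∈ H.edgeSet | ¬(e.map q).IsDiag} \ {s(u, v)} := by
    rintro ⟨a, b⟩ ⟨hab, hcross⟩
    simp only [Sym2.map_mk, Sym2.mk_isDiag_iff] at hcross
    refine ⟨⟨hab, fun h => hcross ?_⟩, fun h => hcross ?_⟩
    · simp only [Sym2.map_mk, Sym2.mk_isDiag_iff] at h
      simp [q', h]
    · rcases Sym2.eq_iff.mp h with ⟨rfl, rfl⟩ | ⟨rfl, rfl⟩ <;> simp [q']
  exact (Set.ncard_le_ncard hsub (Set.toFinite _)).trans_lt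
    (Set.ncard_sdiff_singleton_lt_of_mem huv (Set.toFinite _))

theorem ncard_image_le_ncard_crossing_add_one [Finite α] (hH : H.coe.Preconnected) (q : α → β)
    {T : Set α} (hT : T ⊆ H.verts) :
    (q '' T).ncard ≤ {e ∈ H.edgeSet | ¬(e.map q).IsDiag}.ncard + 1 := by
  classical
  induction hn : {e ∈ H.edgeSet | ¬(e.map q).IsDiag}.ncard using Nat.strong_induction_on
    generalizing q with
  | _ n ih =>
  by_cases hcross : ∃ e ∈ H.edgeSet, ¬(e.map q).IsDiag
  · obtain ⟨⟨u, v⟩, huv⟩ := hcross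
    -- merge the class of `q v` into that of `q u`: fewer crossing edges, at most one class lost
    let q' : α → β := fun w => if q w = q v then q u else q w
    have hlt : {e ∈ H.edgeSet | ¬(e.map q').IsDiag}.ncard < n := hn ▸ ncard_crossing_merge_lt huv
    have himage : q '' T ⊆ insert (q v) (q' '' T) := by
      rintro _ ⟨t, ht, rfl⟩
      by_cases h : q t = q v
      · exact Or.inl h
      · exact Or.inr ⟨t, ht, by simp [q', h]⟩
    have := ih _ hlt q' rfl
    have := Set.ncard_le_ncard himage (Set.toFinite _)
    have := Set.ncard_insert_le (q v) (q' '' T)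
    omega
  · push Not at hcross
    rcases T.eq_empty_or_nonempty with rfl | ⟨t₀, ht₀⟩
    · simp
    have hsub : q '' T ⊆ {q t₀} := by
      rintro _ ⟨t, ht, rfl⟩
      exact apply_eq_of_forall_isDiag hH hcross (hT ht) (hT ht₀)
    have := Set.ncard_le_ncard hsub
    simp only [Set.ncard_singleton] at this
    omega

end SimpleGraph.Subgraph

namespace Finpartition

variable {α : Type*} [DecidableEq α] {s t : Finset α} (π : Finpartition s)

lemma exists_forall_mem_restrict_iff (h : t ⊆ s) {e : Sym2 α} (he : ∀ v ∈ e, v ∈ t) :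
    (∃ P ∈ (π.restrict h).parts, ∀ v ∈ e, v ∈ P) ↔ ∃ P ∈ π.parts, ∀ v ∈ e, v ∈ P := by
  simp only [restrict, Finset.mem_erase, Finset.mem_image, Finset.inf_eq_inter]
  constructor
  · rintro ⟨_, ⟨-, P, hP, rfl⟩, hPe⟩
    exact ⟨P, hP, fun v hv => (Finset.mem_inter.mp (hPe v hv)).1⟩
  · rintro ⟨P, hP, hPe⟩
    have hPt : ∀ v ∈ e, v ∈ P ∩ t := fun v hv => Finset.mem_inter.mpr ⟨hPe v hv, he v hv⟩
    exact ⟨P ∩ t, ⟨Finset.ne_empty_of_mem (hPt _ (Sym2.out_fst_mem e)), P, hP, rfl⟩, hPt⟩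

lemma card_filter_restrict (h : t ⊆ s) (p : α → Prop) [DecidablePred p]
    (hp : ∀ a, p a → a ∈ t) :
    ((π.restrict h).parts.filter fun P => ∃ a ∈ P, p a).card =
      (π.parts.filter fun P => ∃ a ∈ P, p a).card := by
  symm
  apply Finset.card_bij (fun P _ => P ∩ t)
  · simp only [Finset.mem_filter, restrict, Finset.mem_erase, Finset.mem_image,
      Finset.inf_eq_inter]
    rintro P ⟨hP, a, haP, ha⟩
    have hat : a ∈ P ∩ t := Finset.mem_inter.mpr ⟨haP, hp a ha⟩
    exact ⟨⟨Finset.ne_empty_of_mem hat, P, hP, rfl⟩, a, hat, ha⟩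
  · simp only [Finset.mem_filter]
    rintro P ⟨hP, a, haP, ha⟩ Q ⟨hQ, -⟩ hPQ
    have hat : a ∈ P ∩ t := Finset.mem_inter.mpr ⟨haP, hp a ha⟩
    exact π.eq_of_mem_parts hP hQ haP (Finset.mem_inter.mp (hPQ ▸ hat)).1
  · simp only [Finset.mem_filter, restrict, Finset.mem_erase, Finset.mem_image,
      Finset.inf_eq_inter]
    rintro _ ⟨⟨-, P, hP, rfl⟩, a, haP, ha⟩
    exact ⟨P, ⟨hP, a, (Finset.mem_inter.mp haP).1, ha⟩, rfl⟩

lemma exists_forall_mem_iff_isDiag {e : Sym2 α} (he : ∀ v ∈ e, v ∈ s) :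
    (∃ P ∈ π.parts, ∀ v ∈ e, v ∈ P) ↔ (e.map π.part).IsDiag := by
  induction e using Sym2.ind with
  | _ a b =>
  simp only [Sym2.mem_iff, forall_eq_or_imp, forall_eq, Sym2.map_mk, Sym2.mk_isDiag_iff]
  rw [← π.mem_part_iff_exists, π.mem_part_iff_part_eq_part (he a (by simp)) (he b (by simp))]

lemma card_filter_eq_ncard_image_part (p : α → Prop) [DecidablePred p]
    (hp : ∀ a, p a → a ∈ s) :
    (π.parts.filter fun P => ∃ a ∈ P, p a).card = (π.part '' {a | p a}).ncard := by
  rw [← Set.ncard_coe_finset]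
  congr 1
  ext P
  simp only [Finset.coe_filter, Set.mem_image]
  constructor
  · rintro ⟨hP, a, haP, ha⟩
    exact ⟨a, ha, π.part_eq_of_mem hP haP⟩
  · rintro ⟨a, ha, rfl⟩
    exact ⟨π.part_mem.mpr (hp a ha), a, π.mem_part (hp a ha), ha⟩

end Finpartition

theorem SimpleGraph.Subgraph.card_parts_le_ncard_crossing_add_one {α : Type*} [Finite α]
    [DecidableEq α] {G : SimpleGraph α} {H : G.Subgraph} (hH : H.coe.Preconnected)
    {s : Finset α} (π : Finpartition s) (hHs : H.verts ⊆ s) (p : α → Prop) [DecidablePred p]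
    (hp : ∀ a, p a → a ∈ H.verts) :
    (π.parts.filter fun P => ∃ a ∈ P, p a).card ≤
      {e ∈ H.edgeSet | ¬∃ P ∈ π.parts, ∀ v ∈ e, v ∈ P}.ncard + 1 := by
  rw [π.card_filter_eq_ncard_image_part p fun a ha => hHs (hp a ha)]
  convert ncard_image_le_ncard_crossing_add_one hH π.part (T := {a | p a}) hp using 4
  ext e
  refine and_congr_right fun he => not_congr (π.exists_forall_mem_iff_isDiag fun v hv => ?_)
  exact hHs (mem_verts_of_mem_edge he hv)

section finsum

variable {ι β M : Type*} [AddCommMonoid M]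

lemma finsum_mem_const {s : Set β} (hs : s.Finite) (x : M) : ∑ᶠ _ ∈ s, x = s.ncard • x := by
  rw [finsum_mem_eq_finite_toFinset_sum _ hs, Finset.sum_const, Set.ncard_eq_toFinset_card s hs]

lemma finsum_mem_sep_biUnion_finset [Finite β] {F : Finset ι} {E : ι → Set β}
    (hE : (F : Set ι).PairwiseDisjoint E) (p : β → Prop) (f : β → M) :
    ∑ᶠ b ∈ {b ∈ ⋃ i ∈ F, E i | p b}, f b = ∑ i ∈ F, ∑ᶠ b ∈ {b ∈ E i | p b}, f b := by
  have hsep : {b ∈ ⋃ i ∈ F, E i | p b} = ⋃ i ∈ F, {b ∈ E i | p b} := by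
    ext b
    simp only [Set.mem_sep_iff, Set.mem_iUnion₂]
    exact ⟨fun ⟨⟨i, hi, hb⟩, hp⟩ => ⟨i, hi, hb, hp⟩, fun ⟨i, hi, hb, hp⟩ => ⟨⟨i, hi, hb⟩, hp⟩⟩
  rw [hsep, ← Finset.set_biUnion_coe, finsum_mem_biUnion (hE.mono fun i => Set.sep_subset _ _)
    F.finite_toSet fun _ _ => Set.toFinite _, finsum_mem_coe_finset]

lemma finsum_mem_biUnion_finset [Finite β] {F : Finset ι} {E : ι → Set β}
    (hE : (F : Set ι).PairwiseDisjoint E) (f : β → M) :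
    ∑ᶠ b ∈ ⋃ i ∈ F, E i, f b = ∑ i ∈ F, ∑ᶠ b ∈ E i, f b := by
  simpa using finsum_mem_sep_biUnion_finset hE (fun _ => True) f

lemma finsum_mem_diff_eq_finsum_mem_diff_add_sum {s : Set ι} {t u : Finset ι} (htu : t ⊆ u)
    (hus : (u : Set ι) ⊆ s) {f : ι → M} (hf : (Function.support f).Finite) :
    ∑ᶠ i ∈ s \ t, f i = ∑ᶠ i ∈ s \ u, f i + ∑ i ∈ u \ t, f i := by
  rw [← Set.sdiff_union_sdiff_cancel hus (Finset.coe_subset.mpr htu), ← Finset.coe_sdiff,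
    finsum_mem_union' (Set.disjoint_sdiff_left.mono_right (by simp))
      (hf.subset Set.inter_subset_right) (hf.subset Set.inter_subset_right),
    finsum_mem_coe_finset]

end finsum

section extension

variable {𝒦 : Set (FullComp G (R : Set V))} {𝒮 𝒮' : Finset (FullComp G (R : Set V))}
  {xe xe' : Sym2 V → ℝ} {xK xK' : FullComp G (R : Set V) → ℝ}

theorem LPObj_extend (c : Sym2 V → ℝ) (h𝒮 : 𝒮 ⊆ 𝒮')
    (h𝒮'𝒦 : (𝒮' : Set (FullComp G (R : Set V))) ⊆ 𝒦)
    (hdisj : (𝒮' : Set (FullComp G (R : Set V))).PairwiseDisjoint fun K => K.sub.edgeSet)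
    (hxK : (Function.support xK).Finite)
    (hxe'old : ∀ e ∈ ⋃ K ∈ 𝒮, K.sub.edgeSet, xe' e = xe e)
    (hxe'new : ∀ J ∈ 𝒮', J ∉ 𝒮 → ∀ e ∈ J.sub.edgeSet, xe' e = xK J)
    (hxK' : ∀ K, K ∉ 𝒮' → xK' K = xK K) :
    LPObj c 𝒦 𝒮' xe' xK' = LPObj c 𝒦 𝒮 xe xK := by
  have hold : ∀ K ∈ 𝒮, ∑ᶠ e ∈ K.sub.edgeSet, c e * xe' e = ∑ᶠ e ∈ K.sub.edgeSet, c e * xe e :=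
    fun K hK => finsum_mem_congr rfl fun e he => by
      rw [hxe'old e (Set.mem_biUnion hK he)]
  have hnew : ∀ J ∈ 𝒮' \ 𝒮,
      ∑ᶠ e ∈ J.sub.edgeSet, c e * xe' e = (∑ᶠ e ∈ J.sub.edgeSet, c e) * xK J := by
    intro J hJ
    obtain ⟨hJ', hJ⟩ := Finset.mem_sdiff.mp hJ
    rw [finsum_mem_mul]
    exact finsum_mem_congr rfl fun e he => by rw [hxe'new J hJ' hJ e he]
  have hrest : ∀ K ∈ 𝒦 \ (𝒮' : Set (FullComp G (R : Set V))),
      (∑ᶠ e ∈ K.sub.edgeSet, c e) * xK' K = (∑ᶠ e ∈ K.sub.edgeSet, c e) * xK K :=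
    fun K hK => by rw [hxK' K hK.2]
  unfold LPObj
  rw [finsum_mem_biUnion_finset hdisj, finsum_mem_biUnion_finset (hdisj.subset h𝒮),
    ← Finset.sum_sdiff h𝒮, Finset.sum_congr rfl hnew, Finset.sum_congr rfl hold,
    finsum_mem_congr rfl hrest, finsum_mem_diff_eq_finsum_mem_diff_add_sum h𝒮 h𝒮'𝒦
      (hxK.subset (Function.support_mul_subset_right _ _))]
  ring

lemma FullComp.card_terminal_parts_sub_one_mul_le (J : FullComp G (R : Set V)) {W' : Finset V}
    (π' : Finpartition W') (hJ : J.sub.verts ⊆ W') {x : ℝ} (hx : 0 ≤ x) {xe' : Sym2 V → ℝ}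
    (hxe' : ∀ e ∈ J.sub.edgeSet, xe' e = x) :
    (((π'.parts.filter fun P => ∃ t ∈ P, t ∈ (R : Set V) ∧ t ∈ J.sub.verts).card : ℝ) - 1) * x ≤
      ∑ᶠ e ∈ {e ∈ J.sub.edgeSet | ¬∃ P ∈ π'.parts, ∀ v ∈ e, v ∈ P}, xe' e := by
  have hcount := SimpleGraph.Subgraph.card_parts_le_ncard_crossing_add_one
    J.tree.connected.preconnected π' hJ (fun t => t ∈ (R : Set V) ∧ t ∈ J.sub.verts)
    fun _ ht => ht.2
  rw [finsum_mem_congr rfl fun e he => hxe' e he.1, finsum_mem_const (Set.toFinite _),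
    nsmul_eq_mul]
  refine mul_le_mul_of_nonneg_right ?_ hx
  have hcount' : ((π'.parts.filter fun P => ∃ t ∈ P, t ∈ (R : Set V) ∧ t ∈ J.sub.verts).card : ℝ)
      ≤ ({e ∈ J.sub.edgeSet | ¬∃ P ∈ π'.parts, ∀ v ∈ e, v ∈ P}.ncard : ℝ) + 1 := by
    exact_mod_cast hcount
  linarith

lemma subset_and_verts_subset_of_coe_eq {𝒮 : Finset (FullComp G (R : Set V))} {W : Finset V}
    (hW : (W : Set V) = (R : Set V) ∪ ⋃ K ∈ 𝒮, K.sub.verts) :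
    R ⊆ W ∧ ∀ K ∈ 𝒮, K.sub.verts ⊆ W := by
  rw [← Finset.coe_subset, hW]
  exact ⟨Set.subset_union_left, fun K hK v hv => Or.inr (Set.mem_biUnion hK hv)⟩

theorem LPFeasible_extend (h𝒮 : 𝒮 ⊆ 𝒮') (h𝒮'𝒦 : (𝒮' : Set (FullComp G (R : Set V))) ⊆ 𝒦)
    (hdisj : (𝒮' : Set (FullComp G (R : Set V))).PairwiseDisjoint fun K => K.sub.edgeSet)
    {W W' : Finset V} (hW : (W : Set V) = (R : Set V) ∪ ⋃ K ∈ 𝒮, K.sub.verts)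
    (hW' : (W' : Set V) = (R : Set V) ∪ ⋃ K ∈ 𝒮', K.sub.verts)
    (hx : LPFeasible 𝒦 𝒮 W xe xK)
    (hxe'old : ∀ e ∈ ⋃ K ∈ 𝒮, K.sub.edgeSet, xe' e = xe e)
    (hxe'new : ∀ J ∈ 𝒮', J ∉ 𝒮 → ∀ e ∈ J.sub.edgeSet, xe' e = xK J)
    (hxK' : ∀ K, K ∉ 𝒮' → xK' K = xK K) (hxK'0 : ∀ K ∈ 𝒮', xK' K = 0)
    (hxe'0 : ∀ e, 0 ≤ xe' e) :
    LPFeasible 𝒦 𝒮' W' xe' xK' := by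
  obtain ⟨-, hxK0, hxK, hineq⟩ := hx
  obtain ⟨hRW, h𝒮W⟩ := subset_and_verts_subset_of_coe_eq hW
  obtain ⟨-, h𝒮'W'⟩ := subset_and_verts_subset_of_coe_eq hW'
  have hWW' : W ⊆ W' := by
    rw [← Finset.coe_subset, hW, hW']
    exact Set.union_subset_union_right _ (Set.biUnion_subset_biUnion_left h𝒮)
  refine ⟨hxe'0, fun K => ?_, hxK.subset fun K => ?_, fun π' => ?_⟩
  · by_cases hK : K ∈ 𝒮' <;> simp [hK, hxK'0, hxK', hxK0]
  · by_cases hK : K ∈ 𝒮' <;> simp [hK, hxK'0, hxK']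
  set π := π'.restrict hWW'
  have hold : ∀ K ∈ 𝒮, ∑ᶠ e ∈ {e ∈ K.sub.edgeSet | ¬∃ P ∈ π'.parts, ∀ v ∈ e, v ∈ P}, xe' e =
      ∑ᶠ e ∈ {e ∈ K.sub.edgeSet | ¬∃ P ∈ π.parts, ∀ v ∈ e, v ∈ P}, xe e := by
    intro K hK
    refine finsum_mem_congr ?_ fun e he => hxe'old e (Set.mem_biUnion hK he.1)
    ext e
    refine and_congr_right fun he => not_congr (π'.exists_forall_mem_restrict_iff hWW' ?_).symm
    exact fun v hv => h𝒮W K hK (SimpleGraph.Subgraph.mem_verts_of_mem_edge he hv)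
  have hterminals : ∀ K : FullComp G (R : Set V),
      (π.parts.filter fun P => ∃ t ∈ P, t ∈ (R : Set V) ∧ t ∈ K.sub.verts).card =
        (π'.parts.filter fun P => ∃ t ∈ P, t ∈ (R : Set V) ∧ t ∈ K.sub.verts).card :=
    fun K => π'.card_filter_restrict hWW' _ fun t ht => hRW ht.1
  have hnew : ∀ J ∈ 𝒮' \ 𝒮,
      (((π.parts.filter fun P => ∃ t ∈ P, t ∈ (R : Set V) ∧ t ∈ J.sub.verts).card : ℝ) - 1) *
        xK J ≤ ∑ᶠ e ∈ {e ∈ J.sub.edgeSet | ¬∃ P ∈ π'.parts, ∀ v ∈ e, v ∈ P}, xe' e := by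
    intro J hJ
    obtain ⟨hJ', hJ⟩ := Finset.mem_sdiff.mp hJ
    rw [hterminals]
    exact J.card_terminal_parts_sub_one_mul_le π' (h𝒮'W' J hJ') (hxK0 J) (hxe'new J hJ' hJ)
  have hπ := hineq π
  rw [finsum_mem_sep_biUnion_finset (hdisj.subset h𝒮),
    finsum_mem_diff_eq_finsum_mem_diff_add_sum h𝒮 h𝒮'𝒦
      (hxK.subset (Function.support_mul_subset_right _ _)),
    finsum_mem_congr rfl fun K hK => by rw [hterminals, ← hxK' K hK.2],
    π'.card_filter_restrict hWW' _ hRW] at hπ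
  rw [finsum_mem_sep_biUnion_finset hdisj, ← Finset.sum_sdiff h𝒮, Finset.sum_congr rfl hold]
  linarith [Finset.sum_le_sum hnew]

def extendEdgeWeights (𝒮 𝒮' : Finset (FullComp G (R : Set V))) (xe : Sym2 V → ℝ)
    (xK : FullComp G (R : Set V) → ℝ) (e : Sym2 V) : ℝ :=
  if h : ∃ J ∈ 𝒮' \ 𝒮, e ∈ J.sub.edgeSet then xK h.choose else xe e

lemma extendEdgeWeights_of_mem_new
    (hdisj : (𝒮' : Set (FullComp G (R : Set V))).PairwiseDisjoint fun K => K.sub.edgeSet)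
    {J : FullComp G (R : Set V)} (hJ' : J ∈ 𝒮') (hJ : J ∉ 𝒮) {e : Sym2 V}
    (he : e ∈ J.sub.edgeSet) : extendEdgeWeights 𝒮 𝒮' xe xK e = xK J := by
  have hex : ∃ J ∈ 𝒮' \ 𝒮, e ∈ J.sub.edgeSet := ⟨J, Finset.mem_sdiff.mpr ⟨hJ', hJ⟩, he⟩
  obtain ⟨hmem, hemem⟩ := hex.choose_spec
  rw [extendEdgeWeights, dif_pos hex,
    hdisj.elim (Finset.mem_sdiff.mp hmem).1 hJ' (Set.not_disjoint_iff.mpr ⟨e, hemem, he⟩)]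

lemma extendEdgeWeights_of_mem_old (h𝒮 : 𝒮 ⊆ 𝒮')
    (hdisj : (𝒮' : Set (FullComp G (R : Set V))).PairwiseDisjoint fun K => K.sub.edgeSet)
    {e : Sym2 V} (he : e ∈ ⋃ K ∈ 𝒮, K.sub.edgeSet) : extendEdgeWeights 𝒮 𝒮' xe xK e = xe e := by
  obtain ⟨K, hK, heK⟩ := Set.mem_iUnion₂.mp he
  refine dif_neg fun ⟨J, hJ, heJ⟩ => (Finset.mem_sdiff.mp hJ).2 ?_
  rw [hdisj.elim (Finset.mem_sdiff.mp hJ).1 (h𝒮 hK) (Set.not_disjoint_iff.mpr ⟨e, heJ, heK⟩)]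
  exact hK

lemma extendEdgeWeights_nonneg (hxe : ∀ e, 0 ≤ xe e) (hxK : ∀ K, 0 ≤ xK K) (e : Sym2 V) :
    0 ≤ extendEdgeWeights 𝒮 𝒮' xe xK e := by
  unfold extendEdgeWeights
  split_ifs
  exacts [hxK _, hxe e]

lemma LPObj_nonneg {c : Sym2 V → ℝ} (hc : ∀ e, 0 ≤ c e) {W : Finset V}
    (hx : LPFeasible 𝒦 𝒮 W xe xK) : 0 ≤ LPObj c 𝒦 𝒮 xe xK :=
  add_nonneg (finsum_nonneg fun e => finsum_nonneg fun _ => mul_nonneg (hc e) (hx.1 e))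
    (finsum_nonneg fun K => finsum_nonneg fun _ =>
      mul_nonneg (finsum_nonneg fun e => finsum_nonneg fun _ => hc e) (hx.2.1 K))

theorem sInf_LPObj_le_sInf_LPObj {c : Sym2 V → ℝ} (hc : ∀ e, 0 ≤ c e) (h𝒮 : 𝒮 ⊆ 𝒮')
    (h𝒮'𝒦 : (𝒮' : Set (FullComp G (R : Set V))) ⊆ 𝒦)
    (hdisj : (𝒮' : Set (FullComp G (R : Set V))).PairwiseDisjoint fun K => K.sub.edgeSet)
    {W W' : Finset V} (hW : (W : Set V) = (R : Set V) ∪ ⋃ K ∈ 𝒮, K.sub.verts)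
    (hW' : (W' : Set V) = (R : Set V) ∪ ⋃ K ∈ 𝒮', K.sub.verts)
    (hx : LPFeasible 𝒦 𝒮 W xe xK) :
    sInf {r : ℝ | ∃ ye yK, LPFeasible 𝒦 𝒮' W' ye yK ∧ LPObj c 𝒦 𝒮' ye yK = r} ≤
      sInf {r : ℝ | ∃ ye yK, LPFeasible 𝒦 𝒮 W ye yK ∧ LPObj c 𝒦 𝒮 ye yK = r} := by
  refine csInf_le_csInf ⟨0, ?_⟩ ⟨_, xe, xK, hx, rfl⟩ ?_
  · rintro _ ⟨ye, yK, hy, rfl⟩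
    exact LPObj_nonneg hc hy
  · rintro _ ⟨ye, yK, hy, rfl⟩
    have hyK' : ∀ K, K ∉ 𝒮' → (if K ∈ 𝒮' then 0 else yK K) = yK K := fun K hK => if_neg hK
    have hyK'0 : ∀ K ∈ 𝒮', (if K ∈ 𝒮' then 0 else yK K) = 0 := fun K hK => if_pos hK
    have hold : ∀ e ∈ ⋃ K ∈ 𝒮, K.sub.edgeSet, extendEdgeWeights 𝒮 𝒮' ye yK e = ye e :=
      fun _ => extendEdgeWeights_of_mem_old h𝒮 hdisj
    have hnew : ∀ J ∈ 𝒮', J ∉ 𝒮 → ∀ e ∈ J.sub.edgeSet, extendEdgeWeights 𝒮 𝒮' ye yK e = yK J :=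
      fun _ hJ' hJ _ => extendEdgeWeights_of_mem_new hdisj hJ' hJ
    exact ⟨_, _, LPFeasible_extend h𝒮 h𝒮'𝒦 hdisj hW hW' hy hold hnew hyK' hyK'0
      (extendEdgeWeights_nonneg hy.1 hy.2.1),
      LPObj_extend c h𝒮 h𝒮'𝒦 hdisj hy.2.2.1 hold hnew hyK'⟩

end extension

/-- If `𝒮 ⊆ 𝒮'`, every feasible solution `x` of `(P_ST^𝒮)` extends to
a feasible solution `x'` of `(P_ST^{𝒮'})` of the same objective value, by setting
`x'_e = x_J` for each edge `e` of each `J ∈ 𝒮' \ 𝒮` and keeping all other coordinates.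
Consequently the optimal LP values satisfy `opt(P_ST^{𝒮'}) ≤ opt(P_ST^𝒮)` (so the
integrality gap of `(P_ST^𝒮)` is at most that of `(P_ST^{𝒮'})`). -/
theorem stmt13 (c : Sym2 V → ℝ) (hc : ∀ e, 0 ≤ c e)
    (𝒦 : Set (FullComp G (R : Set V)))
    (𝒮 𝒮' : Finset (FullComp G (R : Set V)))
    (h𝒮 : 𝒮 ⊆ 𝒮') (h𝒮'𝒦 : (𝒮' : Set (FullComp G (R : Set V))) ⊆ 𝒦)
    -- full components are pairwise edge-disjoint
    (hdisjE : ∀ K K' : FullComp G (R : Set V), K ∈ 𝒦 → K' ∈ 𝒦 → K ≠ K' →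
      Disjoint K.sub.edgeSet K'.sub.edgeSet)
    (W W' : Finset V)
    (hW : (W : Set V) = (R : Set V) ∪ ⋃ K ∈ 𝒮, K.sub.verts)
    (hW' : (W' : Set V) = (R : Set V) ∪ ⋃ K ∈ 𝒮', K.sub.verts)
    (xe : Sym2 V → ℝ) (xK : FullComp G (R : Set V) → ℝ)
    (hx : LPFeasible 𝒦 𝒮 W xe xK)
    (xe' : Sym2 V → ℝ) (xK' : FullComp G (R : Set V) → ℝ)
    (hxe'old : ∀ e ∈ ⋃ K ∈ 𝒮, K.sub.edgeSet, xe' e = xe e)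
    (hxe'new : ∀ J ∈ 𝒮', J ∉ 𝒮 → ∀ e ∈ J.sub.edgeSet, xe' e = xK J)
    (hxK' : ∀ K, K ∉ 𝒮' → xK' K = xK K) (hxK'0 : ∀ K ∈ 𝒮', xK' K = 0)
    (hxe'0 : ∀ e, 0 ≤ xe' e) :
    (LPFeasible 𝒦 𝒮' W' xe' xK' ∧ LPObj c 𝒦 𝒮' xe' xK' = LPObj c 𝒦 𝒮 xe xK) ∧
    sInf {r : ℝ | ∃ ye yK, LPFeasible 𝒦 𝒮' W' ye yK ∧ LPObj c 𝒦 𝒮' ye yK = r} ≤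
      sInf {r : ℝ | ∃ ye yK, LPFeasible 𝒦 𝒮 W ye yK ∧ LPObj c 𝒦 𝒮 ye yK = r} := by
  have hdisj : (𝒮' : Set (FullComp G (R : Set V))).PairwiseDisjoint fun K => K.sub.edgeSet :=
    fun K hK K' hK' hne => hdisjE K K' (h𝒮'𝒦 hK) (h𝒮'𝒦 hK') hne
  exact ⟨⟨LPFeasible_extend h𝒮 h𝒮'𝒦 hdisj hW hW' hx hxe'old hxe'new hxK' hxK'0 hxe'0,
    LPObj_extend c h𝒮 h𝒮'𝒦 hdisj hx.2.2.1 hxe'old hxe'new hxK'⟩,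
    sInf_LPObj_le_sInf_LPObj hc h𝒮 h𝒮'𝒦 hdisj hW hW' hx⟩
end
end
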